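/- (Corollary 2, second part: the indistinguishability region in the metric case.) Let A be a nonempty finite set and let d : A × A → ℝ be a metric on A (nonnegative, d(a,b) = 0 iff a = b, symmetric, satisfying the triangle inequality). Let P_0, P be PMFs on A and Δ_0, Δ_1 ≥ 0. Then there exists a PMF P_Y on A with EMD_d(P_Y, P_0) ≤ Δ_0 and EMD_d(P_Y, P) ≤ Δ_1 if and only if EMD_d(P_0, P) ≤ Δ_0 + Δ_1. -/

import Mathlib

open scoped Classical
open Finset Filter

noncomputable section

/-- A probability mass function on a finite alphabet, as a real-valued function. -/
def IsPMF {A : Type} [Fintype A] (P : A → ℝ) : Prop :=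
  (∀ a, 0 ≤ P a) ∧ ∑ a, P a = 1

/-- Kullback--Leibler divergence `D(Q‖P) = ∑_{a : Q a > 0} Q a · ln (Q a / P a)`. -/
def klDiv {A : Type} [Fintype A] (Q P : A → ℝ) : ℝ :=
  ∑ a, if 0 < Q a then Q a * Real.log (Q a / P a) else 0

/-- First marginal of a joint PMF on `A × A`. -/
def margX {A : Type} [Fintype A] (Q : A × A → ℝ) : A → ℝ := fun a => ∑ b, Q (a, b)

/-- Second marginal of a joint PMF on `A × A`. -/
def margY {A : Type} [Fintype A] (Q : A × A → ℝ) : A → ℝ := fun b => ∑ a, Q (a, b)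

/-- Expected distortion of a joint PMF. -/
def expDist {A : Type} [Fintype A] (d : A → A → ℝ) (Q : A × A → ℝ) : ℝ :=
  ∑ q : A × A, Q q * d q.1 q.2

/-- Generalized divergence `D̃_Δ(P_Y, P)`: minimum of `D(Q_X‖P)` over joint PMFs `Q`
with second marginal `P_Y` and expected distortion at most `Δ`. -/
def Dtilde {A : Type} [Fintype A] (d : A → A → ℝ) (Δ : ℝ) (PY P : A → ℝ) : ℝ :=
  sInf {v | ∃ Q : A × A → ℝ,
    IsPMF Q ∧ margY Q = PY ∧ expDist d Q ≤ Δ ∧ v = klDiv (margX Q) P}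

/-- Earth mover distance between two PMFs. -/
def EMD {A : Type} [Fintype A] (d : A → A → ℝ) (P P' : A → ℝ) : ℝ :=
  sInf {v | ∃ R : A × A → ℝ,
    IsPMF R ∧ margX R = P ∧ margY R = P' ∧ v = expDist d R}

/-- Memoryless (product) probability of a sequence. -/
def seqProb {A : Type} {n : ℕ} (P : A → ℝ) (x : Fin n → A) : ℝ := ∏ i, P (x i)

/-- Additive extension of a per-letter distortion to sequences. -/
def dSeq {A : Type} {n : ℕ} (d : A → A → ℝ) (x y : Fin n → A) : ℝ := ∑ i, d (x i) (y i)

/-- Empirical PMF (type) of a sequence. -/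
def empP {A : Type} [Fintype A] [DecidableEq A] {n : ℕ} (x : Fin n → A) : A → ℝ :=
  fun a => ((univ.filter fun i => x i = a).card : ℝ) / (n : ℝ)

/-- Empirical entropy of a sequence. -/
def empEnt {A : Type} [Fintype A] [DecidableEq A] {n : ℕ} (y : Fin n → A) : ℝ :=
  -∑ a, if 0 < empP y a then empP y a * Real.log (empP y a) else 0

/-- Conditional type class `T(y|x)`. -/
def condTypeClass {A : Type} [Fintype A] [DecidableEq A] {n : ℕ} (x y : Fin n → A) :
    Finset (Fin n → A) :=
  univ.filter fun y' => ∀ a b : A,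
    (univ.filter fun i => x i = a ∧ y' i = b).card
      = (univ.filter fun i => x i = a ∧ y i = b).card

/-- Number of distinct conditional type classes `T(y|x)` arising from `y` with
`dn x y ≤ n·Δ`. -/
def numCondTypes {A : Type} [Fintype A] [DecidableEq A] {n : ℕ}
    (dn : (Fin n → A) → (Fin n → A) → ℝ) (Δ : ℝ) (x : Fin n → A) : ℕ :=
  ((univ.filter fun y => dn x y ≤ (n : ℝ) * Δ).image fun y => condTypeClass x y).card

/-- The optimal attack channel `A*_Δ(y|x) = c_n(x)/|T(y|x)|` on admissible `y`,
and `0` otherwise; here `c_n(x)` is the reciprocal of the number of admissible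
conditional type classes. -/
def Astar {A : Type} [Fintype A] [DecidableEq A] {n : ℕ}
    (dn : (Fin n → A) → (Fin n → A) → ℝ) (Δ : ℝ) (x y : Fin n → A) : ℝ :=
  if dn x y ≤ (n : ℝ) * Δ then
    ((numCondTypes dn Δ x : ℝ))⁻¹ / ((condTypeClass x y).card : ℝ)
  else 0

/-- A channel on `A^n`: `W x y` is the conditional probability of output `y` given input `x`. -/
def IsChannel {A : Type} [Fintype A] {n : ℕ}
    (W : (Fin n → A) → (Fin n → A) → ℝ) : Prop :=
  (∀ x y, 0 ≤ W x y) ∧ ∀ x, ∑ y, W x y = 1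

/-- The class `C_Δ` of admissible channels: those assigning zero probability to any
`y` with `dn x y > n·Δ`. -/
def InC {A : Type} [Fintype A] {n : ℕ}
    (dn : (Fin n → A) → (Fin n → A) → ℝ) (Δ : ℝ)
    (W : (Fin n → A) → (Fin n → A) → ℝ) : Prop :=
  IsChannel W ∧ ∀ x y, (n : ℝ) * Δ < dn x y → W x y = 0

/-- False positive probability: `Φ y` is the probability of deciding `H₁` given `y`. -/
def PFP {A : Type} [Fintype A] {n : ℕ} (P0 : A → ℝ) (Φ : (Fin n → A) → ℝ)
    (A0 : (Fin n → A) → (Fin n → A) → ℝ) : ℝ :=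
  ∑ x, ∑ y, seqProb P0 x * A0 x y * Φ y

/-- False negative probability. -/
def PFN {A : Type} [Fintype A] {n : ℕ} (P1 : A → ℝ) (Φ : (Fin n → A) → ℝ)
    (A1 : (Fin n → A) → (Fin n → A) → ℝ) : ℝ :=
  ∑ x, ∑ y, seqProb P1 x * A1 x y * (1 - Φ y)

/-- Sequence-level generalized divergence
`D̃ⁿ_Δ(y,P) = min_{x : d(x,y) ≤ nΔ} D(P̂_x‖P)`. -/
def DtildeN {A : Type} [Fintype A] [DecidableEq A] {n : ℕ} (d : A → A → ℝ) (Δ : ℝ)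
    (y : Fin n → A) (P : A → ℝ) : ℝ :=
  sInf {v | ∃ x : Fin n → A, dSeq d x y ≤ (n : ℝ) * Δ ∧ v = klDiv (empP x) P}

/-! The two directions are the triangle inequality for the earth mover distance and its
joint convexity. Optimal couplings exist because the couplings of two PMFs form a compact
set. Gluing an optimal coupling of `(P₀, P_Y)` to one of `(P_Y, P)` through the common
marginal `P_Y` gives a coupling of `(P₀, P)` whose cost is at most the sum of the two costs.
Conversely, if `EMD(P₀, P) ≤ Δ₀ + Δ₁`, the mixture `P_Y = (1 - t) P₀ + t P` with
`t = Δ₀ / (Δ₀ + Δ₁)` lies within `t · EMD(P₀, P) ≤ Δ₀` of `P₀` and within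
`(1 - t) · EMD(P₀, P) ≤ Δ₁` of `P`. -/

section Couplings

variable {A : Type} [Fintype A]

def couplings (P P' : A → ℝ) : Set (A × A → ℝ) :=
  {R | IsPMF R ∧ margX R = P ∧ margY R = P'}

lemma EMD_eq_sInf_image (d : A → A → ℝ) (P P' : A → ℝ) :
    EMD d P P' = sInf (expDist d '' couplings P P') := by
  simp only [EMD, couplings, Set.image, Set.mem_ofPred_eq, and_assoc, eq_comm]

lemma mem_couplings_of_nonneg {P P' : A → ℝ} {R : A × A → ℝ} (hP : IsPMF P)
    (hR : ∀ q, 0 ≤ R q) (hX : margX R = P) (hY : margY R = P') : R ∈ couplings P P' :=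
  ⟨⟨hR, by rw [← hP.2, ← hX]; exact Fintype.sum_prod_type R⟩, hX, hY⟩

lemma margX_convex_comb (a b : ℝ) (R S : A × A → ℝ) :
    margX (a • R + b • S) = a • margX R + b • margX S := by
  funext x
  simp only [margX, Pi.add_apply, Pi.smul_apply, smul_eq_mul, sum_add_distrib, mul_sum]

lemma margY_convex_comb (a b : ℝ) (R S : A × A → ℝ) :
    margY (a • R + b • S) = a • margY R + b • margY S := by
  funext x
  simp only [margY, Pi.add_apply, Pi.smul_apply, smul_eq_mul, sum_add_distrib, mul_sum]

lemma expDist_convex_comb (d : A → A → ℝ) (a b : ℝ) (R S : A × A → ℝ) :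
    expDist d (a • R + b • S) = a * expDist d R + b * expDist d S := by
  simp only [expDist, Pi.add_apply, Pi.smul_apply, smul_eq_mul, add_mul, sum_add_distrib,
    mul_sum, mul_assoc]

lemma IsPMF.convex_comb {P Q : A → ℝ} (hP : IsPMF P) (hQ : IsPMF Q) {a b : ℝ}
    (ha : 0 ≤ a) (hb : 0 ≤ b) (hab : a + b = 1) : IsPMF (a • P + b • Q) := by
  refine ⟨fun x => add_nonneg (mul_nonneg ha (hP.1 x)) (mul_nonneg hb (hQ.1 x)), ?_⟩
  simp only [Pi.add_apply, Pi.smul_apply, smul_eq_mul, sum_add_distrib, ← mul_sum, hP.2,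
    hQ.2, mul_one, hab]

lemma product_mem_couplings {P P' : A → ℝ} (hP : IsPMF P) (hP' : IsPMF P') :
    (fun q : A × A => P q.1 * P' q.2) ∈ couplings P P' := by
  refine mem_couplings_of_nonneg hP (fun q => mul_nonneg (hP.1 q.1) (hP'.1 q.2)) ?_ ?_ <;>
    funext x
  · simp only [margX, ← mul_sum, hP'.2, mul_one]
  · simp only [margY, ← sum_mul, hP.2, one_mul]

lemma diagonal_mem_couplings {P : A → ℝ} (hP : IsPMF P) :
    (fun q : A × A => if q.1 = q.2 then P q.1 else 0) ∈ couplings P P := by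
  refine mem_couplings_of_nonneg hP (fun q => ?_) ?_ ?_
  · split_ifs
    exacts [hP.1 q.1, le_rfl]
  · funext x; simp [margX]
  · funext x; simp [margY]

lemma swap_mem_couplings {P P' : A → ℝ} {R : A × A → ℝ} (hR : R ∈ couplings P P') :
    (R ∘ Prod.swap) ∈ couplings P' P := by
  obtain ⟨hR, hX, hY⟩ := hR
  refine ⟨⟨fun q => hR.1 q.swap, ?_⟩, hY, hX⟩
  rw [← hR.2]
  exact Fintype.sum_equiv (Equiv.prodComm A A) _ _ fun _ => rfl

lemma isCompact_couplings (P P' : A → ℝ) : IsCompact (couplings P P') := by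
  refine Metric.isCompact_of_isClosed_isBounded ?_
    ((Metric.isBounded_Icc (0 : A × A → ℝ) 1).subset fun R hR => ?_)
  · have hX : Continuous (margX : (A × A → ℝ) → A → ℝ) := by unfold margX; fun_prop
    have hY : Continuous (margY : (A × A → ℝ) → A → ℝ) := by unfold margY; fun_prop
    have hC : couplings P P' = ((⋂ q, {R | 0 ≤ R q}) ∩ {R | ∑ q, R q = 1}) ∩
        ({R | margX R = P} ∩ {R | margY R = P'}) := by
      ext R; simp [couplings, IsPMF, and_assoc]
    rw [hC]
    exact ((isClosed_iInter fun q => isClosed_le continuous_const (continuous_apply q)).inter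
      (isClosed_eq (by fun_prop) continuous_const)).inter
      ((isClosed_eq hX continuous_const).inter (isClosed_eq hY continuous_const))
  · obtain ⟨⟨h0, h1⟩, -⟩ := hR
    refine ⟨h0, fun q => ?_⟩
    rw [Pi.one_apply, ← h1]
    exact single_le_sum (fun q _ => h0 q) (mem_univ q)

lemma continuous_expDist (d : A → A → ℝ) : Continuous (expDist d) := by
  unfold expDist; fun_prop

lemma EMD_le_expDist (d : A → A → ℝ) {P P' : A → ℝ} {R : A × A → ℝ}
    (hR : R ∈ couplings P P') : EMD d P P' ≤ expDist d R := by
  rw [EMD_eq_sInf_image]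
  exact csInf_le ((isCompact_couplings P P').image (continuous_expDist d)).bddBelow
    (Set.mem_image_of_mem _ hR)

lemma exists_optimal_coupling (d : A → A → ℝ) {P P' : A → ℝ} (hP : IsPMF P)
    (hP' : IsPMF P') : ∃ R ∈ couplings P P', expDist d R = EMD d P P' := by
  rw [EMD_eq_sInf_image]
  exact ((isCompact_couplings P P').image (continuous_expDist d)).sInf_mem
    ((Set.nonempty_of_mem (product_mem_couplings hP hP')).image _)

lemma EMD_le_EMD_swap (d : A → A → ℝ) (hsymm : ∀ a b, d a b = d b a) {P P' : A → ℝ}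
    (hP : IsPMF P) (hP' : IsPMF P') : EMD d P' P ≤ EMD d P P' := by
  obtain ⟨R, hR, hRopt⟩ := exists_optimal_coupling d hP hP'
  calc EMD d P' P ≤ expDist d (R ∘ Prod.swap) := EMD_le_expDist d (swap_mem_couplings hR)
    _ = expDist d R :=
      Fintype.sum_equiv (Equiv.prodComm A A) _ _ fun q => by simp [hsymm q.1 q.2]
    _ = EMD d P P' := hRopt

lemma EMD_comm (d : A → A → ℝ) (hsymm : ∀ a b, d a b = d b a) {P P' : A → ℝ}
    (hP : IsPMF P) (hP' : IsPMF P') : EMD d P P' = EMD d P' P :=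
  le_antisymm (EMD_le_EMD_swap d hsymm hP' hP) (EMD_le_EMD_swap d hsymm hP hP')

lemma EMD_self_nonpos (d : A → A → ℝ) (hrefl : ∀ a, d a a = 0) {P : A → ℝ} (hP : IsPMF P) :
    EMD d P P ≤ 0 := by
  refine (EMD_le_expDist d (diagonal_mem_couplings hP)).trans_eq (sum_eq_zero fun q _ => ?_)
  dsimp only
  split_ifs with h
  · rw [h, hrefl, mul_zero]
  · rw [zero_mul]

lemma EMD_convex_comb_le (d : A → A → ℝ) {P Q P' Q' : A → ℝ} (hP : IsPMF P) (hQ : IsPMF Q)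
    (hP' : IsPMF P') (hQ' : IsPMF Q') {a b : ℝ} (ha : 0 ≤ a) (hb : 0 ≤ b) (hab : a + b = 1) :
    EMD d (a • P + b • P') (a • Q + b • Q') ≤ a * EMD d P Q + b * EMD d P' Q' := by
  obtain ⟨R, ⟨hR, hRX, hRY⟩, hRopt⟩ := exists_optimal_coupling d hP hQ
  obtain ⟨S, ⟨hS, hSX, hSY⟩, hSopt⟩ := exists_optimal_coupling d hP' hQ'
  have hmix : a • R + b • S ∈ couplings (a • P + b • P') (a • Q + b • Q') :=
    ⟨hR.convex_comb hS ha hb hab, by rw [margX_convex_comb, hRX, hSX],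
      by rw [margY_convex_comb, hRY, hSY]⟩
  calc EMD d (a • P + b • P') (a • Q + b • Q') ≤ expDist d (a • R + b • S) :=
        EMD_le_expDist d hmix
    _ = a * EMD d P Q + b * EMD d P' Q' := by rw [expDist_convex_comb, hRopt, hSopt]

lemma EMD_convex_comb_right_le (d : A → A → ℝ) (hrefl : ∀ a, d a a = 0) {P Q : A → ℝ}
    (hP : IsPMF P) (hQ : IsPMF Q) {a b : ℝ} (ha : 0 ≤ a) (hb : 0 ≤ b) (hab : a + b = 1) :
    EMD d P (a • P + b • Q) ≤ b * EMD d P Q :=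
  calc EMD d P (a • P + b • Q) = EMD d (a • P + b • P) (a • P + b • Q) := by
        rw [Convex.combo_self hab]
    _ ≤ a * EMD d P P + b * EMD d P Q := EMD_convex_comb_le d hP hP hP hQ ha hb hab
    _ ≤ b * EMD d P Q := by
        linarith [mul_nonpos_of_nonneg_of_nonpos ha (EMD_self_nonpos d hrefl hP)]

end Couplings

section Gluing

variable {A : Type} [Fintype A]

/-- Composes a coupling `R` of `(P, Q)` with a coupling `S` of `(Q, P')` through `Q`.
Where `margY R b = 0` the factor `R (a, b)` vanishes, so `x / 0 = 0` does no harm. -/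
def glue (R S : A × A → ℝ) : A × A → ℝ :=
  fun q => ∑ b, R (q.1, b) * S (b, q.2) / margY R b

lemma eq_zero_of_margX_eq_zero {R : A × A → ℝ} (hR : ∀ q, 0 ≤ R q) {a : A}
    (h : margX R a = 0) (b : A) : R (a, b) = 0 :=
  (sum_eq_zero_iff_of_nonneg fun b _ => hR (a, b)).1 h b (mem_univ b)

lemma eq_zero_of_margY_eq_zero {R : A × A → ℝ} (hR : ∀ q, 0 ≤ R q) {b : A}
    (h : margY R b = 0) (a : A) : R (a, b) = 0 :=
  (sum_eq_zero_iff_of_nonneg fun a _ => hR (a, b)).1 h a (mem_univ a)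

variable {R S : A × A → ℝ}

lemma sum_glue_summand_right (hR : ∀ q, 0 ≤ R q) (hRS : margX S = margY R) (a b : A) :
    ∑ c, R (a, b) * S (b, c) / margY R b = R (a, b) := by
  rw [← sum_div, ← mul_sum]
  by_cases h : margY R b = 0
  · rw [eq_zero_of_margY_eq_zero hR h a, zero_mul, zero_div]
  · rw [show ∑ c, S (b, c) = margY R b from congrFun hRS b, mul_div_cancel_right₀ _ h]

lemma sum_glue_summand_left (hS : ∀ q, 0 ≤ S q) (hRS : margX S = margY R) (b c : A) :
    ∑ a, R (a, b) * S (b, c) / margY R b = S (b, c) := by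
  rw [← sum_div, ← sum_mul]
  by_cases h : margY R b = 0
  · rw [eq_zero_of_margX_eq_zero hS ((congrFun hRS b).trans h) c, mul_zero, zero_div]
  · rw [show ∑ a, R (a, b) = margY R b from rfl, mul_div_cancel_left₀ _ h]

lemma glue_mem_couplings {P Q P' : A → ℝ} (hP : IsPMF P) (hR : R ∈ couplings P Q)
    (hS : S ∈ couplings Q P') : glue R S ∈ couplings P P' := by
  obtain ⟨hR, hRX, hRY⟩ := hR
  obtain ⟨hS, hSX, hSY⟩ := hS
  have hRS : margX S = margY R := hSX.trans hRY.symm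
  refine mem_couplings_of_nonneg hP (fun q => sum_nonneg fun b _ => ?_) ?_ ?_
  · exact div_nonneg (mul_nonneg (hR.1 _) (hS.1 _)) (sum_nonneg fun a _ => hR.1 (a, b))
  · funext a
    simp only [margX, glue]
    rw [sum_comm]
    simp only [sum_glue_summand_right hR.1 hRS]
    exact congrFun hRX a
  · funext c
    change ∑ a, ∑ b, R (a, b) * S (b, c) / margY R b = P' c
    rw [sum_comm]
    simp only [sum_glue_summand_left hS.1 hRS]
    exact congrFun hSY c

lemma expDist_glue_le (d : A → A → ℝ) (htri : ∀ a b c, d a c ≤ d a b + d b c)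
    (hR : ∀ q, 0 ≤ R q) (hS : ∀ q, 0 ≤ S q) (hRS : margX S = margY R) :
    expDist d (glue R S) ≤ expDist d R + expDist d S := by
  set w : A → A → A → ℝ := fun a b c => R (a, b) * S (b, c) / margY R b
  have hw : ∀ a b c, 0 ≤ w a b c := fun a b c =>
    div_nonneg (mul_nonneg (hR _) (hS _)) (sum_nonneg fun a _ => hR (a, b))
  calc expDist d (glue R S) = ∑ a, ∑ c, ∑ b, w a b c * d a c := by
        simp only [expDist, glue, Fintype.sum_prod_type, sum_mul, w]
    _ ≤ ∑ a, ∑ c, ∑ b, w a b c * (d a b + d b c) := by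
        gcongr with a _ c _ b _
        exacts [hw a b c, htri a b c]
    _ = ∑ a, ∑ b, (∑ c, w a b c) * d a b + ∑ b, ∑ c, (∑ a, w a b c) * d b c := by
        simp only [mul_add, sum_add_distrib, sum_mul]
        congr 1
        · exact sum_congr rfl fun a _ => sum_comm
        · exact (sum_congr rfl fun a _ => sum_comm).trans
            (sum_comm.trans (sum_congr rfl fun b _ => sum_comm))
    _ = expDist d R + expDist d S := by
        simp only [w, sum_glue_summand_right hR hRS, sum_glue_summand_left hS hRS, expDist,
          Fintype.sum_prod_type]

lemma EMD_triangle (d : A → A → ℝ) (htri : ∀ a b c, d a c ≤ d a b + d b c) {P Q P' : A → ℝ}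
    (hP : IsPMF P) (hQ : IsPMF Q) (hP' : IsPMF P') :
    EMD d P P' ≤ EMD d P Q + EMD d Q P' := by
  obtain ⟨R, hR, hRopt⟩ := exists_optimal_coupling d hP hQ
  obtain ⟨S, hS, hSopt⟩ := exists_optimal_coupling d hQ hP'
  calc EMD d P P' ≤ expDist d (glue R S) := EMD_le_expDist d (glue_mem_couplings hP hR hS)
    _ ≤ expDist d R + expDist d S :=
        expDist_glue_le d htri hR.1.1 hS.1.1 (hS.2.1.trans hR.2.2.symm)
    _ = EMD d P Q + EMD d Q P' := by rw [hRopt, hSopt]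

end Gluing

theorem indistinguishability_metric_general
    {A : Type} [Fintype A]
    (d : A → A → ℝ)
    (hdeq : ∀ a b, d a b = 0 ↔ a = b)
    (hdsymm : ∀ a b, d a b = d b a)
    (hdtri : ∀ a b c, d a c ≤ d a b + d b c)
    (P0 P : A → ℝ) (hP0 : IsPMF P0) (hP : IsPMF P)
    (Δ0 Δ1 : ℝ) (hΔ0 : 0 ≤ Δ0) (hΔ1 : 0 ≤ Δ1) :
    (∃ PY : A → ℝ, IsPMF PY ∧ EMD d PY P0 ≤ Δ0 ∧ EMD d PY P ≤ Δ1)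
      ↔ EMD d P0 P ≤ Δ0 + Δ1 := by
  have hrefl : ∀ a, d a a = 0 := fun a => (hdeq a a).2 rfl
  refine ⟨fun ⟨PY, hPY, h0, h1⟩ => ?_, fun h => ?_⟩
  · calc EMD d P0 P ≤ EMD d P0 PY + EMD d PY P := EMD_triangle d hdtri hP0 hPY hP
      _ ≤ Δ0 + Δ1 := by rw [EMD_comm d hdsymm hP0 hPY]; exact add_le_add h0 h1
  -- If `Δ0 + Δ1 = 0` then `t = 0` (division by zero), which is still the right choice.
  set t := Δ0 / (Δ0 + Δ1)
  have ht0 : 0 ≤ t := by positivity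
  have ht1 : 0 ≤ 1 - t := sub_nonneg.2 (div_le_one_of_le₀ (by linarith) (by positivity))
  have htΔ : t * (Δ0 + Δ1) = Δ0 := by
    rcases (add_nonneg hΔ0 hΔ1).eq_or_lt with hs | hs
    · simp only [t, ← hs, div_zero, zero_mul]; linarith
    · exact div_mul_cancel₀ _ hs.ne'
  have hPY := hP0.convex_comb hP ht1 ht0 (sub_add_cancel 1 t)
  refine ⟨(1 - t) • P0 + t • P, hPY, ?_, ?_⟩
  · calc EMD d ((1 - t) • P0 + t • P) P0 = EMD d P0 ((1 - t) • P0 + t • P) :=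
          EMD_comm d hdsymm hPY hP0
      _ ≤ t * EMD d P0 P := EMD_convex_comb_right_le d hrefl hP0 hP ht1 ht0 (sub_add_cancel 1 t)
      _ ≤ Δ0 := htΔ ▸ mul_le_mul_of_nonneg_left h ht0
  · calc EMD d ((1 - t) • P0 + t • P) P = EMD d P (t • P + (1 - t) • P0) := by
          rw [EMD_comm d hdsymm hPY hP, add_comm]
      _ ≤ (1 - t) * EMD d P P0 :=
          EMD_convex_comb_right_le d hrefl hP hP0 ht0 ht1 (add_sub_cancel t 1)
      _ ≤ Δ1 := by
          rw [EMD_comm d hdsymm hP hP0]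
          linarith [mul_le_mul_of_nonneg_left h ht1]

/-- Corollary 2, second part: the indistinguishability region in the
metric case. -/
theorem indistinguishability_metric
    {A : Type} [Fintype A] [Nonempty A]
    (d : A → A → ℝ) (hd : ∀ a b, 0 ≤ d a b)
    (hdeq : ∀ a b, d a b = 0 ↔ a = b)
    (hdsymm : ∀ a b, d a b = d b a)
    (hdtri : ∀ a b c, d a c ≤ d a b + d b c)
    (P0 P : A → ℝ) (hP0 : IsPMF P0) (hP : IsPMF P)
    (Δ0 Δ1 : ℝ) (hΔ0 : 0 ≤ Δ0) (hΔ1 : 0 ≤ Δ1) :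
    (∃ PY : A → ℝ, IsPMF PY ∧ EMD d PY P0 ≤ Δ0 ∧ EMD d PY P ≤ Δ1)
      ↔ EMD d P0 P ≤ Δ0 + Δ1 :=
  indistinguishability_metric_general d hdeq hdsymm hdtri P0 P hP0 hP Δ0 Δ1 hΔ0 hΔ1
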